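/- Let P be the probability measure on ℝ with density (3/2)^n on J_n = [1 - 1/3^(n-1), 1 - 2/3^n]. Then ∫ min over a ∈ {1/12, 1/4, 13/18, 17/18} of (x - a)^2 dP = 79/44064. Consequently the 4th quantization error satisfies V₄ ≤ 79/44064. -/

import Mathlib

open MeasureTheory Set

/-- The interval `J n = [1 - 1/3^(n-1), 1 - 2/3^n]`. -/
noncomputable def J (n : ℕ) : Set ℝ := Set.Icc (1 - 1 / 3 ^ (n - 1)) (1 - 2 / 3 ^ n)

/-- The piecewise constant density: `(3/2)^n` on `J n` for `n ≥ 1`, `0` elsewhere. -/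
noncomputable def f (x : ℝ) : ℝ :=
  ∑' n : ℕ, Set.indicator (J (n + 1)) (fun _ => ((3 : ℝ) / 2) ^ (n + 1)) x

/-- The piecewise uniform probability measure on `ℝ` with density `f`. -/
noncomputable def P : Measure ℝ :=
  MeasureTheory.volume.withDensity (fun x => ENNReal.ofReal (f x))

/-! On `J 1 = [0, 1/3]` the codebook points `1/12, 1/4` are the midpoints of its two halves,
on `J 2 = [2/3, 7/9]` the point `13/18` is its midpoint, and every later `J n` lies in the
Voronoi cell `[5/6, ∞)` of `17/18`. The cost of `J 1` and `J 2` is therefore that of a uniform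
distribution quantized at midpoints, while for `n ≥ 3` the cost of `J n` is a cubic polynomial
in `3⁻ⁿ` weighted by `(3/2)ⁿ`, i.e. a combination of the geometric sequences `2⁻ⁿ, 6⁻ⁿ, 18⁻ⁿ`.
Summing gives `1/864 + 1/3888 + 25/66096 = 79/44064`. -/

open Function

section PiecewiseDensity

variable {α ι : Type*} {s : ι → Set α}

lemma tsum_indicator_apply_of_mem {M : Type*} [AddCommMonoid M] [TopologicalSpace M]
    (hs : Pairwise (Disjoint on s)) {g : ι → α → M} {k : ι} {x : α} (hx : x ∈ s k) :
    ∑' i, (s i).indicator (g i) x = g k x := by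
  rw [tsum_eq_single k fun i hi => indicator_of_notMem (fun hi' => (hs hi).ne_of_mem hi' hx rfl) _,
    indicator_of_mem hx]

variable [MeasurableSpace α]

lemma withDensity_ofReal_tsum_indicator [Countable ι] (μ : Measure α)
    (hsm : ∀ i, MeasurableSet (s i)) (hs : Pairwise (Disjoint on s)) (c : ι → ℝ) :
    μ.withDensity (fun x => ENNReal.ofReal (∑' i, (s i).indicator (fun _ => c i) x)) =
      Measure.sum fun i => ENNReal.ofReal (c i) • μ.restrict (s i) := by
  have hdens : (fun x => ENNReal.ofReal (∑' i, (s i).indicator (fun _ => c i) x)) =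
      ∑' i, (s i).indicator fun _ => ENNReal.ofReal (c i) := by
    funext x
    rw [tsum_apply (Pi.summable.2 fun _ => ENNReal.summable)]
    by_cases hx : ∃ k, x ∈ s k
    · obtain ⟨k, hk⟩ := hx
      rw [tsum_indicator_apply_of_mem hs hk, tsum_indicator_apply_of_mem hs hk]
    · simp [indicator_of_notMem, not_exists.mp hx]
  rw [hdens, withDensity_tsum fun i => measurable_const.indicator (hsm i)]
  congr 1
  funext i
  rw [withDensity_indicator (hsm i), withDensity_const]

lemma integral_sum_smul_restrict_of_hasSum (μ : Measure α) {c : ι → ℝ} (hc : ∀ i, 0 ≤ c i)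
    {g : α → ℝ} (hg : Measurable g) (hg0 : 0 ≤ g) (hgi : ∀ i, IntegrableOn g (s i) μ) {S : ℝ}
    (hS : HasSum (fun i => c i * ∫ x in s i, g x ∂μ) S) :
    ∫ x, g x ∂(Measure.sum fun i => ENNReal.ofReal (c i) • μ.restrict (s i)) = S := by
  have hpiece : ∀ i, ∫⁻ x, ENNReal.ofReal (g x) ∂(ENNReal.ofReal (c i) • μ.restrict (s i)) =
      ENNReal.ofReal (c i * ∫ x in s i, g x ∂μ) := fun i => by
    rw [lintegral_smul_measure, ← ofReal_integral_eq_lintegral_ofReal (hgi i)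
      (Filter.Eventually.of_forall hg0), smul_eq_mul, ← ENNReal.ofReal_mul (hc i)]
  have hterm_nonneg : ∀ i, 0 ≤ c i * ∫ x in s i, g x ∂μ :=
    fun i => mul_nonneg (hc i) (integral_nonneg hg0)
  rw [integral_eq_lintegral_of_nonneg_ae (Filter.Eventually.of_forall hg0) hg.aestronglyMeasurable,
    lintegral_sum_measure]
  simp_rw [hpiece]
  rw [← ENNReal.ofReal_tsum_of_nonneg hterm_nonneg hS.summable, hS.tsum_eq,
    ENNReal.toReal_ofReal (hS.nonneg hterm_nonneg)]

end PiecewiseDensity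

lemma csInf_integral_iInf_sq_le {ι : Type*} (μ : Measure ℝ) (a : ι → ℝ) :
    sInf {v : ℝ | ∃ b : ι → ℝ, v = ∫ x, ⨅ i, (x - b i) ^ 2 ∂μ} ≤ ∫ x, ⨅ i, (x - a i) ^ 2 ∂μ := by
  refine csInf_le ⟨0, ?_⟩ ⟨a, rfl⟩
  rintro v ⟨b, rfl⟩
  exact integral_nonneg fun x => Real.iInf_nonneg fun i => sq_nonneg _

lemma ciInf_fin_four {β : Type*} [ConditionallyCompleteLinearOrder β] (h : Fin 4 → β) :
    ⨅ i, h i = min (min (h 0) (h 1)) (min (h 2) (h 3)) := by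
  rw [← Finset.inf'_univ_eq_ciInf]
  simp [Fin.univ_succ, min_assoc]

lemma sq_sub_le_sq_sub_of_le_midpoint {a b x : ℝ} (hab : a ≤ b) (hx : x ≤ (a + b) / 2) :
    (x - a) ^ 2 ≤ (x - b) ^ 2 := by
  nlinarith

lemma sq_sub_le_sq_sub_of_midpoint_le {a b x : ℝ} (hab : a ≤ b) (hx : (a + b) / 2 ≤ x) :
    (x - b) ^ 2 ≤ (x - a) ^ 2 := by
  nlinarith

lemma intervalIntegral_eq_of_eqOn_sq_sub {a b c : ℝ} {g : ℝ → ℝ} (hab : a ≤ b)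
    (hg : EqOn g (fun x => (x - c) ^ 2) (Icc a b)) :
    ∫ x in a..b, g x = ((b - c) ^ 3 - (a - c) ^ 3) / 3 := by
  rw [intervalIntegral.integral_congr (by rwa [uIcc_of_le hab]),
    intervalIntegral.integral_comp_sub_right (fun x => x ^ 2), integral_pow]
  ring

lemma J_succ (n : ℕ) : J (n + 1) = Icc (1 - (1 / 3) ^ n) (1 - 2 / 3 * (1 / 3) ^ n) := by
  simp only [J, Nat.add_sub_cancel, one_div_pow, pow_succ]
  ring_nf

lemma pairwise_disjoint_J_succ : Pairwise (Disjoint on fun n => J (n + 1)) := by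
  refine (pairwise_disjoint_on _).2 fun m n hmn => disjoint_left.2 fun x hxm hxn => ?_
  rw [J_succ] at hxm hxn
  have hpow : (1 / 3 : ℝ) ^ n ≤ (1 / 3) ^ (m + 1) :=
    pow_le_pow_of_le_one (by norm_num) (by norm_num) hmn
  rw [pow_succ] at hpow
  have hpos : (0 : ℝ) < (1 / 3) ^ m := by positivity
  linarith [hxm.2, hxn.1]

lemma P_eq_sum : P = Measure.sum fun n =>
    ENNReal.ofReal ((3 / 2 : ℝ) ^ (n + 1)) • volume.restrict (J (n + 1)) :=
  withDensity_ofReal_tsum_indicator volume (fun n => by rw [J_succ]; exact measurableSet_Icc)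
    pairwise_disjoint_J_succ _

noncomputable def sqDistCodebook (x : ℝ) : ℝ :=
  min (min ((x - 1 / 12) ^ 2) ((x - 1 / 4) ^ 2)) (min ((x - 13 / 18) ^ 2) ((x - 17 / 18) ^ 2))

lemma continuous_sqDistCodebook : Continuous sqDistCodebook := by
  unfold sqDistCodebook
  fun_prop

lemma sqDistCodebook_nonneg : 0 ≤ sqDistCodebook := fun _ =>
  le_min (le_min (sq_nonneg _) (sq_nonneg _)) (le_min (sq_nonneg _) (sq_nonneg _))

lemma sqDistCodebook_of_le {x : ℝ} (hx : x ≤ 1 / 6) : sqDistCodebook x = (x - 1 / 12) ^ 2 := by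
  have hAB : (x - 1 / 12) ^ 2 ≤ (x - 1 / 4) ^ 2 :=
    sq_sub_le_sq_sub_of_le_midpoint (by norm_num) (by linarith)
  have hAC : (x - 1 / 12) ^ 2 ≤ (x - 13 / 18) ^ 2 :=
    sq_sub_le_sq_sub_of_le_midpoint (by norm_num) (by linarith)
  have hAD : (x - 1 / 12) ^ 2 ≤ (x - 17 / 18) ^ 2 :=
    sq_sub_le_sq_sub_of_le_midpoint (by norm_num) (by linarith)
  rw [sqDistCodebook, min_eq_left hAB, min_eq_left (le_min hAC hAD)]

lemma sqDistCodebook_of_mem_Icc_one_sixth_one_third {x : ℝ} (hx : x ∈ Icc (1 / 6) (1 / 3)) :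
    sqDistCodebook x = (x - 1 / 4) ^ 2 := by
  have hBA : (x - 1 / 4) ^ 2 ≤ (x - 1 / 12) ^ 2 :=
    sq_sub_le_sq_sub_of_midpoint_le (by norm_num) (by linarith [hx.1])
  have hBC : (x - 1 / 4) ^ 2 ≤ (x - 13 / 18) ^ 2 :=
    sq_sub_le_sq_sub_of_le_midpoint (by norm_num) (by linarith [hx.2])
  have hBD : (x - 1 / 4) ^ 2 ≤ (x - 17 / 18) ^ 2 :=
    sq_sub_le_sq_sub_of_le_midpoint (by norm_num) (by linarith [hx.2])
  rw [sqDistCodebook, min_eq_right hBA, min_eq_left (le_min hBC hBD)]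

lemma sqDistCodebook_of_mem_Icc_two_thirds_seven_ninths {x : ℝ} (hx : x ∈ Icc (2 / 3) (7 / 9)) :
    sqDistCodebook x = (x - 13 / 18) ^ 2 := by
  have hCA : (x - 13 / 18) ^ 2 ≤ (x - 1 / 12) ^ 2 :=
    sq_sub_le_sq_sub_of_midpoint_le (by norm_num) (by linarith [hx.1])
  have hCB : (x - 13 / 18) ^ 2 ≤ (x - 1 / 4) ^ 2 :=
    sq_sub_le_sq_sub_of_midpoint_le (by norm_num) (by linarith [hx.1])
  have hCD : (x - 13 / 18) ^ 2 ≤ (x - 17 / 18) ^ 2 :=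
    sq_sub_le_sq_sub_of_le_midpoint (by norm_num) (by linarith [hx.2])
  rw [sqDistCodebook, min_eq_left hCD, min_eq_right (le_min hCA hCB)]

lemma sqDistCodebook_of_ge {x : ℝ} (hx : 5 / 6 ≤ x) : sqDistCodebook x = (x - 17 / 18) ^ 2 := by
  have hDA : (x - 17 / 18) ^ 2 ≤ (x - 1 / 12) ^ 2 :=
    sq_sub_le_sq_sub_of_midpoint_le (by norm_num) (by linarith)
  have hDB : (x - 17 / 18) ^ 2 ≤ (x - 1 / 4) ^ 2 :=
    sq_sub_le_sq_sub_of_midpoint_le (by norm_num) (by linarith)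
  have hDC : (x - 17 / 18) ^ 2 ≤ (x - 13 / 18) ^ 2 :=
    sq_sub_le_sq_sub_of_midpoint_le (by norm_num) (by linarith)
  rw [sqDistCodebook, min_eq_right hDC, min_eq_right (le_min hDA hDB)]

noncomputable def costJ (n : ℕ) : ℝ := (3 / 2) ^ (n + 1) * ∫ x in J (n + 1), sqDistCodebook x

lemma setIntegral_J_succ (n : ℕ) (g : ℝ → ℝ) :
    ∫ x in J (n + 1), g x = ∫ x in (1 - (1 / 3) ^ n)..(1 - 2 / 3 * (1 / 3) ^ n), g x := by
  have hle : (1 : ℝ) - (1 / 3) ^ n ≤ 1 - 2 / 3 * (1 / 3) ^ n := by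
    have : (0 : ℝ) ≤ (1 / 3) ^ n := by positivity
    linarith
  rw [J_succ, integral_Icc_eq_integral_Ioc, intervalIntegral.integral_of_le hle]

lemma costJ_zero : costJ 0 = 1 / 864 := by
  rw [costJ, setIntegral_J_succ]
  norm_num
  rw [← intervalIntegral.integral_add_adjacent_intervals (b := 1 / 6)
      (continuous_sqDistCodebook.intervalIntegrable _ _)
      (continuous_sqDistCodebook.intervalIntegrable _ _),
    intervalIntegral_eq_of_eqOn_sq_sub (by norm_num) fun x hx => sqDistCodebook_of_le hx.2,
    intervalIntegral_eq_of_eqOn_sq_sub (by norm_num)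
      fun x hx => sqDistCodebook_of_mem_Icc_one_sixth_one_third hx]
  norm_num

lemma costJ_one : costJ 1 = 1 / 3888 := by
  rw [costJ, setIntegral_J_succ, intervalIntegral_eq_of_eqOn_sq_sub (by norm_num)
    fun x hx => sqDistCodebook_of_mem_Icc_two_thirds_seven_ninths (by norm_num at hx ⊢; exact hx)]
  norm_num

lemma costJ_add_two (n : ℕ) : costJ (n + 2) =
    1 / 2592 * (1 / 2 : ℝ) ^ n - 5 / 3888 * (1 / 6 : ℝ) ^ n + 19 / 17496 * (1 / 18 : ℝ) ^ n := by
  set t : ℝ := (1 / 3) ^ n with ht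
  have ht0 : 0 ≤ t := by positivity
  have ht1 : t ≤ 1 := pow_le_one₀ (by norm_num) (by norm_num)
  have hJ : (1 / 3 : ℝ) ^ (n + 2) = t / 9 := by rw [pow_add, ← ht]; ring
  rw [costJ, setIntegral_J_succ, hJ, intervalIntegral_eq_of_eqOn_sq_sub (by linarith)
    fun x hx => sqDistCodebook_of_ge (by linarith [hx.1])]
  have h2 : (1 / 2 : ℝ) ^ n = (3 / 2) ^ n * t := by rw [ht, ← mul_pow]; norm_num
  have h6 : (1 / 6 : ℝ) ^ n = (3 / 2) ^ n * t ^ 2 := by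
    rw [ht, ← pow_mul, pow_mul', ← mul_pow]; norm_num
  have h18 : (1 / 18 : ℝ) ^ n = (3 / 2) ^ n * t ^ 3 := by
    rw [ht, ← pow_mul, pow_mul', ← mul_pow]; norm_num
  rw [h2, h6, h18, pow_add]
  ring

lemma hasSum_costJ : HasSum costJ (79 / 44064) := by
  have htail : HasSum (fun n => costJ (n + 2)) (25 / 66096) := by
    simp_rw [costJ_add_two]
    have geom (r : ℝ) (h0 : 0 ≤ r) (h1 : r < 1) := hasSum_geometric_of_lt_one h0 h1
    convert (((geom (1 / 2) (by norm_num) (by norm_num)).mul_left (1 / 2592)).sub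
      ((geom (1 / 6) (by norm_num) (by norm_num)).mul_left (5 / 3888))).add
      ((geom (1 / 18) (by norm_num) (by norm_num)).mul_left (19 / 17496)) using 1
    · rfl
    · norm_num
  convert (hasSum_nat_add_iff 2).mp htail using 1
  · rfl
  rw [Finset.sum_range_succ, Finset.sum_range_one, costJ_zero, costJ_one]
  norm_num

lemma integral_sqDistCodebook_P : ∫ x, sqDistCodebook x ∂P = 79 / 44064 := by
  rw [P_eq_sum]
  exact integral_sum_smul_restrict_of_hasSum volume (fun n => by positivity)
    continuous_sqDistCodebook.measurable sqDistCodebook_nonneg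
    (fun n => by rw [J_succ]; exact continuous_sqDistCodebook.integrableOn_Icc) hasSum_costJ

theorem stmt_8 :
    (∫ x, min (min ((x - 1 / 12) ^ 2) ((x - 1 / 4) ^ 2))
        (min ((x - 13 / 18) ^ 2) ((x - 17 / 18) ^ 2)) ∂P) = 79 / 44064 ∧
    sInf {v : ℝ | ∃ a : Fin 4 → ℝ, v = ∫ x, ⨅ i : Fin 4, (x - a i) ^ 2 ∂P} ≤ 79 / 44064 := by
  refine ⟨integral_sqDistCodebook_P, ?_⟩
  calc _ ≤ ∫ x, ⨅ i, (x - ![1 / 12, 1 / 4, 13 / 18, 17 / 18] i) ^ 2 ∂P :=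
        csInf_integral_iInf_sq_le P _
    _ = 79 / 44064 := by
        simp only [ciInf_fin_four]
        exact integral_sqDistCodebook_P
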